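/- Let δ > 0, p ≥ 2, set U_M = 4 σ² (δ+1) ν_r^{-2} ‖Ψ_M‖_F² ln p, and let θ̂ be any minimizer over the simplex Θ_𝓜 = {θ : θ_M ≥ 0 for all M ∈ 𝓜, Σ_{M∈𝓜} θ_M = 1} of Σ_{M∈𝓜} θ_M ( ‖z − f̂_M‖² + 2 U_M ) + ‖z − Σ_{M∈𝓜} θ_M f̂_M‖², with f̂_{θ̂} = Σ_{M∈𝓜} θ̂_M f̂_M. Then, pointwise in ε, for every M₀ ∈ 𝓜: ‖f − f̂_{θ̂}‖² ≤ ‖f − f̂_{M₀}‖² + U_{M₀} − Σ_{M∈𝓜} θ̂_M U_M + 2σ⟨ξ, f̂_{θ̂} − f̂_{M₀}⟩ − (1/2) Σ_{M∈𝓜} θ̂_M ‖f̂_M − f̂_{M₀}‖². -/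
import Mathlib


open MeasureTheory ProbabilityTheory Matrix Finset

noncomputable section

/-- Squared Euclidean norm of a vector in `ℝ^k`. -/
def sqnorm {k : ℕ} (v : Fin k → ℝ) : ℝ := ∑ i, v i ^ 2

/-- Euclidean inner product on `ℝ^k`. -/
def ip {k : ℕ} (u v : Fin k → ℝ) : ℝ := ∑ i, u i * v i

/-- The `j`-th column of a matrix. -/
def colv {a b : ℕ} (B : Matrix (Fin a) (Fin b) ℝ) (j : Fin b) : Fin a → ℝ := fun i => B i j

/-- The matrix `B_M`: the columns of `B` outside `M` are replaced by zero. -/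
def restr {a b : ℕ} (B : Matrix (Fin a) (Fin b) ℝ) (M : Finset (Fin b)) :
    Matrix (Fin a) (Fin b) ℝ := fun i j => if j ∈ M then B i j else 0

/-- Squared Frobenius norm of a matrix. -/
def frob2 {a b : ℕ} (B : Matrix (Fin a) (Fin b) ℝ) : ℝ := ∑ j, sqnorm (colv B j)

/-- `x` has at most `r` nonzero coordinates. -/
def sparse {k : ℕ} (r : ℕ) (x : Fin k → ℝ) : Prop := (Function.support x).ncard ≤ r

/-- `H` is the orthogonal projection matrix of `ℝ^m` onto `span{φ_j : j ∈ M}`: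
symmetric, idempotent, with range equal to the span of the columns of `Φ` indexed by `M`. -/
def IsProjOnto {m p : ℕ} (Φ : Matrix (Fin m) (Fin p) ℝ) (M : Finset (Fin p))
    (H : Matrix (Fin m) (Fin m) ℝ) : Prop :=
  H.IsSymm ∧ H * H = H ∧
    LinearMap.range H.mulVecLin = Submodule.span ℝ (colv Φ '' (M : Set (Fin p)))

/-- `Ψ = A (AᵀA)⁻¹ Φ`. -/
def Psi {n m p : ℕ} (A : Matrix (Fin n) (Fin m) ℝ) (Φ : Matrix (Fin m) (Fin p) ℝ) :
    Matrix (Fin n) (Fin p) ℝ := A * (Aᵀ * A)⁻¹ * Φ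

/-- `z = (AᵀA)⁻¹ Aᵀ y` where `y = A f + σ e`. -/
def zv {n m : ℕ} (A : Matrix (Fin n) (Fin m) ℝ) (f : Fin m → ℝ) (σ : ℝ) (e : Fin n → ℝ) :
    Fin m → ℝ := ((Aᵀ * A)⁻¹ * Aᵀ).mulVec (A.mulVec f + σ • e)

/-- `ξ = (AᵀA)⁻¹ Aᵀ e`. -/
def xiv {n m : ℕ} (A : Matrix (Fin n) (Fin m) ℝ) (e : Fin n → ℝ) : Fin m → ℝ :=
  ((Aᵀ * A)⁻¹ * Aᵀ).mulVec e

/-- The collection `𝓜` of models of size at most `r/2`. -/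
def models (p r : ℕ) : Finset (Finset (Fin p)) := Finset.univ.filter fun M => 2 * M.card ≤ r

open scoped Classical in
/-- The restricted collection `𝓜_γ = {M ∈ 𝓜 : ‖Ψ_M‖_F² ≤ γ²n}`. -/
def modelsG {n m p : ℕ} (r : ℕ) (A : Matrix (Fin n) (Fin m) ℝ) (Φ : Matrix (Fin m) (Fin p) ℝ)
    (γ : ℝ) : Finset (Finset (Fin p)) :=
  Finset.univ.filter fun M => 2 * M.card ≤ r ∧ frob2 (restr (Psi A Φ) M) ≤ γ ^ 2 * (n : ℝ)

/-- The aggregated estimator `f̂_θ = ∑_{M ∈ C} θ_M f̂_M`, where `f̂_M = H_M z`. -/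
def aggEst {m p : ℕ} (C : Finset (Finset (Fin p)))
    (H : Finset (Fin p) → Matrix (Fin m) (Fin m) ℝ) (zvec : Fin m → ℝ)
    (θ : Finset (Fin p) → ℝ) : Fin m → ℝ :=
  ∑ M ∈ C, θ M • (H M).mulVec zvec

/-- The penalty `U_M = 4σ²(δ+1)ν_r⁻² ‖Ψ_M‖_F² ln p`. -/
def Ufun {n m p : ℕ} (A : Matrix (Fin n) (Fin m) ℝ) (Φ : Matrix (Fin m) (Fin p) ℝ)
    (σ δ ν2 : ℝ) (M : Finset (Fin p)) : ℝ :=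
  4 * σ ^ 2 * (δ + 1) / ν2 * frob2 (restr (Psi A Φ) M) * Real.log p

/-- The Q-aggregation criterion (with `α = 1/2`, multiplied by 2):
`∑_M θ_M (‖z - f̂_M‖² + 2U_M) + ‖z - f̂_θ‖²`. -/
def aggCrit {m p : ℕ} (C : Finset (Finset (Fin p)))
    (H : Finset (Fin p) → Matrix (Fin m) (Fin m) ℝ) (zvec : Fin m → ℝ)
    (U : Finset (Fin p) → ℝ) (θ : Finset (Fin p) → ℝ) : ℝ :=
  ∑ M ∈ C, θ M * (sqnorm (zvec - (H M).mulVec zvec) + 2 * U M) +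
    sqnorm (zvec - aggEst C H zvec θ)

section QAux

variable {k : ℕ}

lemma sqnorm_nonneg' (v : Fin k → ℝ) : 0 ≤ sqnorm v :=
  Finset.sum_nonneg fun i _ => sq_nonneg _

lemma sqnorm_eq_ip (v : Fin k → ℝ) : sqnorm v = ip v v := by
  simp [sqnorm, ip, sq]

lemma sqnorm_sub_expand (u v : Fin k → ℝ) :
    sqnorm (u - v) = sqnorm u - 2 * ip u v + sqnorm v := by
  have h : ∀ i : Fin k, (u i - v i) ^ 2 = u i ^ 2 - 2 * (u i * v i) + v i ^ 2 :=
    fun i => by ring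
  simp only [sqnorm, ip, Pi.sub_apply]
  simp_rw [h, Finset.sum_add_distrib, Finset.sum_sub_distrib, ← Finset.mul_sum]

lemma sqnorm_sub_comm (u v : Fin k → ℝ) : sqnorm (u - v) = sqnorm (v - u) := by
  simp only [sqnorm, Pi.sub_apply]
  exact Finset.sum_congr rfl fun i _ => by ring

lemma ip_sub_right (u a b : Fin k → ℝ) : ip u (a - b) = ip u a - ip u b := by
  simp only [ip, Pi.sub_apply]
  simp_rw [mul_sub, Finset.sum_sub_distrib]

lemma ip_smul_right (u : Fin k → ℝ) (t : ℝ) (v : Fin k → ℝ) :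
    ip u (t • v) = t * ip u v := by
  simp only [ip, Pi.smul_apply, smul_eq_mul, Finset.mul_sum]
  exact Finset.sum_congr rfl fun i _ => by ring

lemma sqnorm_smul (t : ℝ) (v : Fin k → ℝ) : sqnorm (t • v) = t ^ 2 * sqnorm v := by
  simp only [sqnorm, Pi.smul_apply, smul_eq_mul, Finset.mul_sum]
  exact Finset.sum_congr rfl fun i _ => by ring

lemma sqnorm_sub_smul (x : Fin k → ℝ) (t : ℝ) (u : Fin k → ℝ) :
    sqnorm (x - t • u) = sqnorm x - 2 * t * ip x u + t ^ 2 * sqnorm u := by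
  rw [sqnorm_sub_expand, ip_smul_right, sqnorm_smul]; ring

lemma sqnorm_add_smul (x : Fin k → ℝ) (s : ℝ) (y : Fin k → ℝ) :
    sqnorm (x + s • y) = sqnorm x + 2 * s * ip y x + s ^ 2 * sqnorm y := by
  have h : ∀ i : Fin k, (x i + s * y i) ^ 2 =
      x i ^ 2 + 2 * (s * (y i * x i)) + s ^ 2 * y i ^ 2 := fun i => by ring
  simp only [sqnorm, ip, Pi.add_apply, Pi.smul_apply, smul_eq_mul]
  simp_rw [h, Finset.sum_add_distrib, ← Finset.mul_sum]
  ring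

lemma ip_sum_right {ι : Type*} (C : Finset ι) (θ : ι → ℝ) (w : ι → Fin k → ℝ)
    (u : Fin k → ℝ) :
    ip u (∑ M ∈ C, θ M • w M) = ∑ M ∈ C, θ M * ip u (w M) := by
  simp only [ip, Finset.sum_apply, Pi.smul_apply, smul_eq_mul, Finset.mul_sum]
  rw [Finset.sum_comm]
  exact Finset.sum_congr rfl fun M _ => Finset.sum_congr rfl fun i _ => by ring

lemma var_identity {ι : Type*} (C : Finset ι) (θ : ι → ℝ) (hsum : ∑ M ∈ C, θ M = 1)
    (w : ι → Fin k → ℝ) (v : Fin k → ℝ) :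
    ∑ M ∈ C, θ M * sqnorm (v - w M) =
      sqnorm (v - ∑ M ∈ C, θ M • w M) +
        ∑ M ∈ C, θ M * sqnorm (w M - ∑ M ∈ C, θ M • w M) := by
  set W := ∑ M ∈ C, θ M • w M with hW
  have expand : ∀ x : Fin k → ℝ, ∑ M ∈ C, θ M * sqnorm (x - w M) =
      sqnorm x - 2 * ip x W + ∑ M ∈ C, θ M * sqnorm (w M) := by
    intro x
    have hx : ip x W = ∑ M ∈ C, θ M * ip x (w M) := ip_sum_right C θ w x
    calc ∑ M ∈ C, θ M * sqnorm (x - w M)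
        = ∑ M ∈ C, (θ M * sqnorm x - 2 * (θ M * ip x (w M)) + θ M * sqnorm (w M)) :=
          Finset.sum_congr rfl fun M _ => by rw [sqnorm_sub_expand]; ring
      _ = (∑ M ∈ C, θ M) * sqnorm x - 2 * ∑ M ∈ C, θ M * ip x (w M) +
            ∑ M ∈ C, θ M * sqnorm (w M) := by
          rw [Finset.sum_add_distrib, Finset.sum_sub_distrib, ← Finset.sum_mul,
            ← Finset.mul_sum]
      _ = sqnorm x - 2 * ip x W + ∑ M ∈ C, θ M * sqnorm (w M) := by rw [hsum, hx]; ring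
  have h1 := expand v
  have h2 : ∑ M ∈ C, θ M * sqnorm (w M - W) =
      ∑ M ∈ C, θ M * sqnorm (W - w M) := by
    exact Finset.sum_congr rfl fun M _ => by rw [sqnorm_sub_comm]
  have h3 := expand W
  have h4 : ip W W = sqnorm W := (sqnorm_eq_ip W).symm
  rw [h1, sqnorm_sub_expand, h2, h3, h4]; ring

end QAux

/-- The deterministic inequality (eq. (28)) for the Q-aggregation minimizer: pointwise
in `ε`, for every `M₀ ∈ 𝓜`,
`‖f − f̂_θ̂‖² ≤ ‖f − f̂_{M₀}‖² + U_{M₀} − ∑_M θ̂_M U_M + 2σ⟨ξ, f̂_θ̂ − f̂_{M₀}⟩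
− (1/2)∑_M θ̂_M ‖f̂_M − f̂_{M₀}‖²`. -/
theorem Q_aggregation_basic_inequality
    {n m p r : ℕ} (hp : 2 ≤ p) (hmn : m ≤ n)
    (A : Matrix (Fin n) (Fin m) ℝ) (hrank : A.rank = m)
    (Φ : Matrix (Fin m) (Fin p) ℝ) (hΦnorm : ∀ j, sqnorm (colv Φ j) = 1)
    (σ : ℝ) (hσ : 0 < σ) (δ : ℝ) (hδ : 0 < δ)
    (ν2 : ℝ) (hν2 : 0 < ν2)
    (hν2min : ∀ x : Fin p → ℝ, x ≠ 0 → sparse r x → ν2 * sqnorm x ≤ sqnorm (Φ.mulVec x))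
    (H : Finset (Fin p) → Matrix (Fin m) (Fin m) ℝ)
    (hH : ∀ M : Finset (Fin p), IsProjOnto Φ M (H M))
    (f : Fin m → ℝ) (ε : Fin n → ℝ)
    (θhat : Finset (Fin p) → ℝ)
    (hθnn : ∀ M ∈ models p r, 0 ≤ θhat M)
    (hθsum : ∑ M ∈ models p r, θhat M = 1)
    (hθmin : ∀ θ : Finset (Fin p) → ℝ,
      (∀ M ∈ models p r, 0 ≤ θ M) → (∑ M ∈ models p r, θ M = 1) →
      aggCrit (models p r) H (zv A f σ ε) (Ufun A Φ σ δ ν2) θhat ≤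
        aggCrit (models p r) H (zv A f σ ε) (Ufun A Φ σ δ ν2) θ) :
    ∀ M₀ ∈ models p r,
      sqnorm (f - aggEst (models p r) H (zv A f σ ε) θhat) ≤
        sqnorm (f - (H M₀).mulVec (zv A f σ ε)) + Ufun A Φ σ δ ν2 M₀ -
          (∑ M ∈ models p r, θhat M * Ufun A Φ σ δ ν2 M) +
          2 * σ * ip (xiv A ε)
            (aggEst (models p r) H (zv A f σ ε) θhat - (H M₀).mulVec (zv A f σ ε)) -
          1 / 2 * ∑ M ∈ models p r,
            θhat M * sqnorm ((H M).mulVec (zv A f σ ε) - (H M₀).mulVec (zv A f σ ε)) := by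
    classical
  intro M₀ hM₀
  set C := models p r with hC
  set U := Ufun A Φ σ δ ν2 with hUdef
  set z := zv A f σ ε with hzdef
  set ξ := xiv A ε with hξdef
  set G := aggEst C H z θhat with hGdef
  set w0 := (H M₀).mulVec z with hw0def
  have hunit : IsUnit (Aᵀ * A) := by
    apply Matrix.mulVec_surjective_iff_isUnit.mp
    have hr : (Aᵀ * A).rank = m := by rw [Matrix.rank_transpose_mul_self]; exact hrank
    have htop : LinearMap.range (Aᵀ * A).mulVecLin = ⊤ := by
      apply Submodule.eq_top_of_finrank_eq
      rw [← Matrix.rank, hr, Module.finrank_pi]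
      simp
    intro v
    obtain ⟨x, hx⟩ := LinearMap.range_eq_top.mp htop v
    exact ⟨x, hx⟩
  have hinv : (Aᵀ * A)⁻¹ * (Aᵀ * A) = 1 :=
    Matrix.nonsing_inv_mul _ ((Matrix.isUnit_iff_isUnit_det _).mp hunit)
  have hzf : z = f + σ • ξ := by
    rw [hzdef, hξdef]
    unfold zv xiv
    rw [Matrix.mulVec_add, Matrix.mulVec_smul, Matrix.mulVec_mulVec, Matrix.mul_assoc, hinv,
      Matrix.one_mulVec]
  have hGsum : G = ∑ M ∈ C, θhat M • (H M).mulVec z := rfl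
  set S := ∑ M ∈ C, θhat M * sqnorm (z - (H M).mulVec z) with hSdef
  set Uθ := ∑ M ∈ C, θhat M * U M with hUθdef
  set u := w0 - G with hudef
  set c := sqnorm u with hcdef
  set D := sqnorm (z - w0) + 2 * U M₀ - (S + 2 * Uθ) - 2 * ip (z - G) u with hDdef
  have hsplit : ∑ M ∈ C, θhat M * (sqnorm (z - (H M).mulVec z) + 2 * U M) = S + 2 * Uθ := by
    calc ∑ M ∈ C, θhat M * (sqnorm (z - (H M).mulVec z) + 2 * U M)
        = ∑ M ∈ C, (θhat M * sqnorm (z - (H M).mulVec z) + 2 * (θhat M * U M)) :=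
          Finset.sum_congr rfl fun M _ => by ring
      _ = S + 2 * Uθ := by
          rw [Finset.sum_add_distrib, ← Finset.mul_sum, hSdef, hUθdef]
  have hcritθ : aggCrit C H z U θhat = (S + 2 * Uθ) + sqnorm (z - G) := by
    unfold aggCrit
    rw [hsplit, ← hGdef]
  have hD : 0 ≤ D := by
    have hcnn : 0 ≤ c := sqnorm_nonneg' u
    have key : ∀ t : ℝ, 0 < t → t ≤ 1 → 0 ≤ D + t * c := by
      intro t ht ht1
      set θt : Finset (Fin p) → ℝ :=
        fun M => θhat M + t * ((if M = M₀ then 1 else 0) - θhat M) with hθt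
      have hnn : ∀ M ∈ C, 0 ≤ θt M := by
        intro M hM
        have h := hθnn M hM
        simp only [hθt]
        split <;> nlinarith
      have hs1 : ∑ M ∈ C, θt M = 1 := by
        simp only [hθt]
        rw [Finset.sum_add_distrib, ← Finset.mul_sum, Finset.sum_sub_distrib,
          Finset.sum_ite_eq' C M₀ (fun _ => (1:ℝ)), if_pos hM₀, hθsum]
        ring
      have hδ : ∑ M ∈ C, (if M = M₀ then (1:ℝ) else 0) • (H M).mulVec z = w0 := by
        simp only [ite_smul, one_smul, zero_smul]
        rw [Finset.sum_ite_eq' C M₀ (fun M => (H M).mulVec z), if_pos hM₀, hw0def]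
      have haggt : aggEst C H z θt = G + t • u := by
        calc aggEst C H z θt = ∑ M ∈ C, θt M • (H M).mulVec z := rfl
          _ = ∑ M ∈ C, (θhat M • (H M).mulVec z +
                t • ((if M = M₀ then (1:ℝ) else 0) • (H M).mulVec z -
                  θhat M • (H M).mulVec z)) := by
              refine Finset.sum_congr rfl fun M _ => ?_
              funext i
              simp only [hθt, Pi.add_apply, Pi.smul_apply, Pi.sub_apply, smul_eq_mul]
              ring
          _ = G + t • (∑ M ∈ C, (if M = M₀ then (1:ℝ) else 0) • (H M).mulVec z - G) := by
              rw [Finset.sum_add_distrib, ← Finset.smul_sum, Finset.sum_sub_distrib, ← hGsum]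
          _ = G + t • u := by rw [hδ, ← hudef]
      have hδ2 : ∑ M ∈ C, (if M = M₀ then (1:ℝ) else 0) *
          (sqnorm (z - (H M).mulVec z) + 2 * U M) =
          sqnorm (z - w0) + 2 * U M₀ := by
        simp only [ite_mul, one_mul, zero_mul]
        rw [Finset.sum_ite_eq' C M₀
          (fun M => sqnorm (z - (H M).mulVec z) + 2 * U M), if_pos hM₀, hw0def]
      have hlin : ∑ M ∈ C, θt M * (sqnorm (z - (H M).mulVec z) + 2 * U M) =
          (S + 2 * Uθ) + t * ((sqnorm (z - w0) + 2 * U M₀) - (S + 2 * Uθ)) := by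
        calc ∑ M ∈ C, θt M * (sqnorm (z - (H M).mulVec z) + 2 * U M)
            = ∑ M ∈ C, (θhat M * (sqnorm (z - (H M).mulVec z) + 2 * U M) +
                t * ((if M = M₀ then (1:ℝ) else 0) *
                    (sqnorm (z - (H M).mulVec z) + 2 * U M) -
                  θhat M * (sqnorm (z - (H M).mulVec z) + 2 * U M))) :=
              Finset.sum_congr rfl fun M _ => by simp only [hθt]; ring
          _ = (S + 2 * Uθ) + t * ((sqnorm (z - w0) + 2 * U M₀) - (S + 2 * Uθ)) := by
              rw [Finset.sum_add_distrib, ← Finset.mul_sum, Finset.sum_sub_distrib,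
                hδ2, hsplit]
      have hquad : sqnorm (z - aggEst C H z θt) =
          sqnorm (z - G) - 2 * t * ip (z - G) u + t ^ 2 * c := by
        rw [haggt, sub_add_eq_sub_sub, sqnorm_sub_smul, hcdef]
      have hexpand : aggCrit C H z U θt =
          ((S + 2 * Uθ) + sqnorm (z - G)) + (t * D + t ^ 2 * c) := by
        unfold aggCrit
        rw [hlin, hquad, hDdef]
        ring
      have hmin := hθmin θt hnn hs1
      rw [hcritθ, hexpand] at hmin
      have h2 : 0 ≤ t * (D + t * c) := by nlinarith
      have h3 := (mul_nonneg_iff_of_pos_left ht).mp h2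
      linarith
    refine le_of_forall_pos_le_add fun ε' hε' => ?_
    have hcp : (0:ℝ) < c + 1 := by linarith
    set t := min 1 (ε' / (c + 1)) with htdef
    have ht : 0 < t := lt_min one_pos (div_pos hε' hcp)
    have ht1 : t ≤ 1 := min_le_left _ _
    have h1 := key t ht ht1
    have h2 : t * c ≤ ε' := by
      have h3 : t ≤ ε' / (c + 1) := min_le_right _ _
      have h4 : ε' / (c + 1) * (c + 1) = ε' := div_mul_cancel₀ _ hcp.ne'
      nlinarith
    linarith
  have hvar1 : S = sqnorm (z - G) + ∑ M ∈ C, θhat M * sqnorm ((H M).mulVec z - G) := by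
    have h := var_identity C θhat hθsum (fun M => (H M).mulVec z) z
    simp only [← hGsum] at h
    rw [hSdef]
    exact h
  have hvar2 : ∑ M ∈ C, θhat M * sqnorm ((H M).mulVec z - w0) =
      c + ∑ M ∈ C, θhat M * sqnorm ((H M).mulVec z - G) := by
    have h := var_identity C θhat hθsum (fun M => (H M).mulVec z) w0
    simp only [← hGsum] at h
    calc ∑ M ∈ C, θhat M * sqnorm ((H M).mulVec z - w0)
        = ∑ M ∈ C, θhat M * sqnorm (w0 - (H M).mulVec z) :=
          Finset.sum_congr rfl fun M _ => by rw [sqnorm_sub_comm]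
      _ = sqnorm (w0 - G) + ∑ M ∈ C, θhat M * sqnorm ((H M).mulVec z - G) := h
      _ = c + ∑ M ∈ C, θhat M * sqnorm ((H M).mulVec z - G) := by rw [hcdef, hudef]
  have hexp2 : sqnorm (z - w0) = sqnorm (z - G) - 2 * ip (z - G) u + c := by
    have h : z - w0 = (z - G) - u := by rw [hudef]; abel
    rw [h, sqnorm_sub_expand, hcdef]
  have e1 : sqnorm (z - G) = sqnorm (f - G) + 2 * σ * ip ξ (f - G) + σ ^ 2 * sqnorm ξ := by
    have h : z - G = (f - G) + σ • ξ := by rw [hzf]; abel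
    rw [h, sqnorm_add_smul]
  have e2 : sqnorm (z - w0) = sqnorm (f - w0) + 2 * σ * ip ξ (f - w0) + σ ^ 2 * sqnorm ξ := by
    have h : z - w0 = (f - w0) + σ • ξ := by rw [hzf]; abel
    rw [h, sqnorm_add_smul]
  have e3 : σ * ip ξ (G - w0) = σ * ip ξ (f - w0) - σ * ip ξ (f - G) := by
    have h : ip ξ (G - w0) = ip ξ (f - w0) - ip ξ (f - G) := by
      rw [← ip_sub_right]
      congr 1
      abel
    rw [h]; ring
  rw [hDdef] at hD
  linarith [hD, hvar1, hvar2, hexp2, e1, e2, e3]
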